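/- arXiv:math-ph/0512095 — 2 statements merged into one kernel-verified Lean document; each statement's English description precedes it below -/
import Mathlib

section
/- If A ⊂ V* is a ∨-system and B = A ∩ U for a subspace U ⊂ V*, then the restriction of A \ B to the subspace L = ∩_{β∈B} ker β (with collinear restricted covectors combined by replacing covectors λ_i γ, i = 1,…,k by the single covector λγ with λ² = Σλ_i²) is again a ∨-system on L. -/
open scoped Classical

/-- `A : ι → V*` (a finite family of covectors, allowing multiplicities) is a ∨-system:
the Gram form `G^A(u,v) = Σ_i A_i(u)·A_i(v)` is non-degenerate (represented by a linear
isomorphism `φ : V ≃ V*`), and for every two-dimensional plane `Pl ⊂ V*` and every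
member `A_i ∈ Pl`, the vector `Σ_{A_j ∈ Pl} A_j(A_i^∨) • A_j^∨` is proportional to
`A_i^∨`, where `α^∨ = φ⁻¹(α)`. -/
def IsVeeSystem {V : Type*} [AddCommGroup V] [Module ℝ V] {ι : Type*} [Fintype ι]
    (A : ι → Module.Dual ℝ V) : Prop :=
  ∃ φ : V ≃ₗ[ℝ] Module.Dual ℝ V,
    (∀ u v : V, φ u v = ∑ i, A i u * A i v) ∧
    ∀ Pl : Submodule ℝ (Module.Dual ℝ V), Module.finrank ℝ Pl = 2 →
      ∀ i, A i ∈ Pl → ∃ lam : ℝ,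
        ∑ j ∈ Finset.univ.filter (fun j => A j ∈ Pl),
            A j (φ.symm (A i)) • φ.symm (A j) = lam • φ.symm (A i)

/-!
The ∨-conditions, stated for planes, hold for every subspace `W ⊆ V*`: the operator
`M_W x = Σ_{α ∈ A ∩ W} α(x) α^∨` maps `α^∨` into `ℝ α^∨` for each `α ∈ A ∩ W`, since the
covectors of `A ∩ W` not collinear with `α` are partitioned by the planes through `α`.

Since `B` vanishes on `L`, the Gram form of the restricted family is `G^A` restricted to `L`, and
the dual in `L` of `γ|_L` is `q γ^∨`, with `q` the `G^A`-orthogonal projection onto `L`. For a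
plane `Π ⊆ L*` with preimage `P ⊆ V*`, the ∨-sum of the restricted system is `q ∘ M_P`. Now
`(α|_L)^∨ = α^∨ + δ` with `δ ∈ L^⊥ = span {β^∨ | β ∈ B}`; `M_P` maps `α^∨` into `ℝ α^∨`, preserves
`L^⊥` (as `B ⊆ P`) and `q` kills `L^⊥`, so `q (M_P (α|_L)^∨) ∈ ℝ (α|_L)^∨`.
-/

open Module Submodule Finset

theorem finrank_span_pair_eq_two {K M : Type*} [Field K] [AddCommGroup M] [Module K M]
    {x y : M} (hx : x ≠ 0) (hy : y ∉ K ∙ x) : finrank K (span K {x, y}) = 2 := by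
  have hli : LinearIndependent K ![x, y] :=
    (LinearIndependent.pair_iff' hx).2 fun a h =>
      hy (h ▸ smul_mem _ a (mem_span_singleton_self x))
  have h := finrank_span_eq_card hli
  rw [Matrix.range_cons_cons_empty] at h
  simpa using h

theorem biInf_ker_eq_dualCoannihilator_span {R M ι : Type*} [CommRing R] [AddCommGroup M]
    [Module R M] (f : ι → Dual R M) (s : Set ι) :
    ⨅ i ∈ s, LinearMap.ker (f i) = (span R (f '' s)).dualCoannihilator := by
  refine SetLike.coe_injective ?_
  rw [coe_dualCoannihilator_span]
  ext x
  simp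

theorem dualAnnihilator_biInf_ker {K V ι : Type*} [Field K] [AddCommGroup V] [Module K V]
    [FiniteDimensional K V] (f : ι → Dual K V) (s : Set ι) :
    (⨅ i ∈ s, LinearMap.ker (f i)).dualAnnihilator = span K (f '' s) := by
  rw [biInf_ker_eq_dualCoannihilator_span, Subspace.dualCoannihilator_dualAnnihilator_eq]

theorem sum_compl_eq_sum {ι M : Type*} [Fintype ι] [AddCommMonoid M] (s : Set ι) (f : ι → M)
    (hf : ∀ i ∈ s, f i = 0) : ∑ i : ↥sᶜ, f i = ∑ i, f i := by
  rw [← Finset.sum_subtype (univ.filter (· ∉ s)) (by simp), sum_filter_of_ne]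
  exact fun i _ hi his => hi (hf i his)

theorem sum_mem_iff_sum_filter_not {ι R M : Type*} [Ring R] [AddCommGroup M] [Module R M]
    (N : Submodule R M) (S : Finset ι) (p : ι → Prop) (f : ι → M)
    (hf : ∀ j ∈ S, p j → f j ∈ N) :
    ∑ j ∈ S, f j ∈ N ↔ ∑ j ∈ S.filter (fun j => ¬ p j), f j ∈ N := by
  rw [← sum_filter_add_sum_filter_not S p]
  exact add_mem_cancel_left (N.sum_mem fun j hj => hf j (mem_filter.1 hj).1 (mem_filter.1 hj).2)

section VeeOp

variable {V : Type*} [AddCommGroup V] [Module ℝ V] {ι : Type*} [Fintype ι]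

noncomputable def veeOp (φ : V ≃ₗ[ℝ] Dual ℝ V) (A : ι → Dual ℝ V)
    (W : Submodule ℝ (Dual ℝ V)) : V →ₗ[ℝ] V :=
  ∑ j ∈ univ.filter (fun j => A j ∈ W), (A j).smulRight (φ.symm (A j))

theorem veeOp_apply (φ : V ≃ₗ[ℝ] Dual ℝ V) (A : ι → Dual ℝ V) (W : Submodule ℝ (Dual ℝ V))
    (x : V) : veeOp φ A W x = ∑ j ∈ univ.filter (fun j => A j ∈ W), A j x • φ.symm (A j) := by
  simp [veeOp]

theorem isVeeSystem_iff {A : ι → Dual ℝ V} : IsVeeSystem A ↔ ∃ φ : V ≃ₗ[ℝ] Dual ℝ V,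
    (∀ u v : V, φ u v = ∑ i, A i u * A i v) ∧
    ∀ Pl : Submodule ℝ (Dual ℝ V), finrank ℝ Pl = 2 → ∀ i, A i ∈ Pl →
      veeOp φ A Pl (φ.symm (A i)) ∈ ℝ ∙ φ.symm (A i) := by
  simp only [IsVeeSystem, veeOp_apply, mem_span_singleton, eq_comm]

theorem veeOp_comp_equiv {κ : Type*} [Fintype κ] (φ : V ≃ₗ[ℝ] Dual ℝ V) (A : ι → Dual ℝ V)
    (e : κ ≃ ι) (W : Submodule ℝ (Dual ℝ V)) : veeOp φ (A ∘ e) W = veeOp φ A W := by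
  simp only [veeOp, sum_filter, Function.comp_apply]
  exact e.sum_comp fun i => if A i ∈ W then (A i).smulRight (φ.symm (A i)) else 0

theorem IsVeeSystem.comp_equiv {κ : Type*} [Fintype κ] {A : ι → Dual ℝ V} (hA : IsVeeSystem A)
    (e : κ ≃ ι) : IsVeeSystem (A ∘ e) := by
  obtain ⟨φ, hGram, hvee⟩ := isVeeSystem_iff.1 hA
  refine isVeeSystem_iff.2 ⟨φ, fun u v => ?_, fun Pl hPl k hk => ?_⟩
  · rw [hGram]
    exact (e.sum_comp fun i => A i u * A i v).symm
  · rw [veeOp_comp_equiv]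
    exact hvee Pl hPl (e k) hk

theorem veeOp_compl_apply (φ : V ≃ₗ[ℝ] Dual ℝ V) (A : ι → Dual ℝ V) (s : Set ι)
    (W : Submodule ℝ (Dual ℝ V)) {x : V} (hx : ∀ i ∈ s, A i x = 0) :
    veeOp φ (fun i : ↥sᶜ => A i) W x = veeOp φ A W x := by
  simp only [veeOp_apply, sum_filter]
  exact sum_compl_eq_sum s (fun i => if A i ∈ W then A i x • φ.symm (A i) else 0)
    fun i hi => by simp [hx i hi]

theorem veeOp_mem_span_singleton {φ : V ≃ₗ[ℝ] Dual ℝ V} {A : ι → Dual ℝ V}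
    (hvee : ∀ Pl : Submodule ℝ (Dual ℝ V), finrank ℝ Pl = 2 → ∀ i, A i ∈ Pl →
      veeOp φ A Pl (φ.symm (A i)) ∈ ℝ ∙ φ.symm (A i))
    (W : Submodule ℝ (Dual ℝ V)) {i : ι} (hi : A i ∈ W) :
    veeOp φ A W (φ.symm (A i)) ∈ ℝ ∙ φ.symm (A i) := by
  rcases eq_or_ne (A i) 0 with h0 | h0
  · simp [h0]
  have hcol : ∀ S : Finset ι, ∑ j ∈ S, A j (φ.symm (A i)) • φ.symm (A j) ∈ ℝ ∙ φ.symm (A i) ↔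
      ∑ j ∈ S.filter (fun j => A j ∉ ℝ ∙ A i), A j (φ.symm (A i)) • φ.symm (A j) ∈
        ℝ ∙ φ.symm (A i) := by
    refine fun S => sum_mem_iff_sum_filter_not _ S _ _ fun j _ hj => smul_mem _ _ ?_
    obtain ⟨c, hc⟩ := mem_span_singleton.1 hj
    rw [← hc, map_smul]
    exact smul_mem _ c (mem_span_singleton_self _)
  let plane : ι → Submodule ℝ (Dual ℝ V) := fun j => span ℝ {A i, A j}
  have hplane : ∀ {j}, A j ∉ ℝ ∙ A i → finrank ℝ (plane j) = 2 :=
    finrank_span_pair_eq_two h0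
  have hfiber : ∀ {j}, A j ∈ W → A j ∉ ℝ ∙ A i →
      (univ.filter fun k => A k ∈ W ∧ A k ∉ ℝ ∙ A i).filter (fun k => plane k = plane j) =
        (univ.filter fun k => A k ∈ plane j).filter (fun k => A k ∉ ℝ ∙ A i) := by
    intro j hjW hj
    ext k
    simp only [mem_filter, mem_univ, true_and]
    constructor
    · rintro ⟨⟨-, hk⟩, hkj⟩
      exact ⟨hkj ▸ subset_span (Set.mem_insert_of_mem _ rfl), hk⟩
    · rintro ⟨hkj, hk⟩
      have := FiniteDimensional.span_of_finite ℝ (Set.toFinite {A i, A j})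
      have hle : plane k ≤ plane j := span_le.2 <| Set.insert_subset (subset_span
        (Set.mem_insert _ _)) (Set.singleton_subset_iff.2 hkj)
      have hjW' : plane j ≤ W := span_le.2 (Set.insert_subset hi (Set.singleton_subset_iff.2 hjW))
      exact ⟨⟨hjW' hkj, hk⟩, eq_of_le_of_finrank_eq hle ((hplane hk).trans (hplane hj).symm)⟩
  rw [veeOp_apply, hcol, filter_filter,
    ← sum_fiberwise_of_maps_to (g := plane) fun j hj => mem_image_of_mem plane hj]
  refine sum_mem fun P hP => ?_
  obtain ⟨j, hj, rfl⟩ := mem_image.1 hP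
  rw [mem_filter] at hj
  rw [hfiber hj.2.1 hj.2.2, ← hcol, ← veeOp_apply]
  exact hvee _ (hplane hj.2.2) i (subset_span (Set.mem_insert _ _))

end VeeOp

section Restriction

variable {V : Type*} [AddCommGroup V] [Module ℝ V] {ι : Type*} [Fintype ι]
  {A : ι → Dual ℝ V} {φ : V ≃ₗ[ℝ] Dual ℝ V}

theorem eq_zero_of_gram_self_eq_zero (hGram : ∀ u v, φ u v = ∑ i, A i u * A i v) {u : V}
    (hu : φ u u = 0) : u = 0 := by
  rw [hGram] at hu
  have hAu : ∀ i, A i u = 0 := fun i => mul_self_eq_zero.1 <|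
    (sum_eq_zero_iff_of_nonneg fun j _ => mul_self_nonneg (A j u)).1 hu i (mem_univ i)
  refine φ.map_eq_zero_iff.1 (LinearMap.ext fun v => ?_)
  simp [hGram, hAu]

theorem exists_linearEquiv_dual_restrict [FiniteDimensional ℝ V]
    (hGram : ∀ u v, φ u v = ∑ i, A i u * A i v) (L : Submodule ℝ V) :
    ∃ ψ : L ≃ₗ[ℝ] Dual ℝ L, ∀ u v : L, ψ u v = φ u v := by
  let ψ₀ : L →ₗ[ℝ] Dual ℝ L := L.subtype.dualMap ∘ₗ φ.toLinearMap ∘ₗ L.subtype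
  have hinj : Function.Injective ψ₀ := (injective_iff_map_eq_zero ψ₀).2 fun u hu =>
    Subtype.ext (eq_zero_of_gram_self_eq_zero hGram (LinearMap.congr_fun hu u))
  exact ⟨LinearMap.linearEquivOfInjective ψ₀ hinj Subspace.dual_finrank_eq.symm, fun _ _ => rfl⟩

/-- When `ψ` represents the restriction of the Gram form to `L`, this is the orthogonal
projection onto `L`. -/
noncomputable def gramProj (φ : V ≃ₗ[ℝ] Dual ℝ V) {L : Submodule ℝ V} (ψ : L ≃ₗ[ℝ] Dual ℝ L) :
    V →ₗ[ℝ] L :=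
  ψ.symm.toLinearMap ∘ₗ L.subtype.dualMap ∘ₗ φ.toLinearMap

theorem gramProj_symm_apply {L : Submodule ℝ V} (ψ : L ≃ₗ[ℝ] Dual ℝ L) (γ : Dual ℝ V) :
    gramProj φ ψ (φ.symm γ) = ψ.symm (γ.domRestrict L) := by
  simp only [gramProj, LinearMap.comp_apply, LinearEquiv.coe_coe, LinearEquiv.apply_symm_apply]
  rfl

theorem veeOp_domRestrict_apply {L : Submodule ℝ V} (ψ : L ≃ₗ[ℝ] Dual ℝ L)
    (Pl : Submodule ℝ (Dual ℝ L)) (u : L) :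
    veeOp ψ (fun i => (A i).domRestrict L) Pl u =
      gramProj φ ψ (veeOp φ A (Pl.comap L.subtype.dualMap) u) := by
  simp only [veeOp_apply, map_sum, map_smul, gramProj_symm_apply]
  rfl

theorem gramProj_veeOp_mem_span_singleton
    (hvee : ∀ Pl : Submodule ℝ (Dual ℝ V), finrank ℝ Pl = 2 → ∀ i, A i ∈ Pl →
      veeOp φ A Pl (φ.symm (A i)) ∈ ℝ ∙ φ.symm (A i))
    {L : Submodule ℝ V} {ψ : L ≃ₗ[ℝ] Dual ℝ L} (hψ : ∀ u v : L, ψ u v = φ u v) {s : Set ι}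
    (hann : L.dualAnnihilator = span ℝ (A '' s)) {P : Submodule ℝ (Dual ℝ V)}
    (hP : L.dualAnnihilator ≤ P) {i : ι} (hi : A i ∈ P) :
    gramProj φ ψ (veeOp φ A P (ψ.symm ((A i).domRestrict L))) ∈
      ℝ ∙ ψ.symm ((A i).domRestrict L) := by
  set u := ψ.symm ((A i).domRestrict L)
  set N := L.dualAnnihilator.map φ.symm.toLinearMap
  have hN : N ≤ N.comap (veeOp φ A P) := by
    simp only [N]
    rw [hann, map_span, span_le]
    rintro _ ⟨_, ⟨j, hj, rfl⟩, rfl⟩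
    have hsub : φ.symm (A j) ∈ span ℝ (φ.symm.toLinearMap '' (A '' s)) :=
      subset_span ⟨_, ⟨j, hj, rfl⟩, rfl⟩
    exact (span_singleton_le_iff_mem _ _).2 hsub
      (veeOp_mem_span_singleton hvee P (hP (hann ▸ subset_span ⟨j, hj, rfl⟩)))
  have hNker : ∀ x ∈ N, gramProj φ ψ x = 0 := by
    rintro _ ⟨δ, hδ, rfl⟩
    rw [LinearEquiv.coe_coe, gramProj_symm_apply,
      show δ.domRestrict L = 0 from LinearMap.mem_ker.1 hδ, map_zero]
  have hδ : φ u - A i ∈ L.dualAnnihilator := by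
    refine (mem_dualAnnihilator _).2 fun w hw => ?_
    rw [LinearMap.sub_apply, sub_eq_zero, ← hψ u ⟨w, hw⟩, LinearEquiv.apply_symm_apply]
    rfl
  have hδN : φ.symm (φ u - A i) ∈ N := ⟨_, hδ, rfl⟩
  have hu : (u : V) = φ.symm (A i) + φ.symm (φ u - A i) := by simp
  obtain ⟨t, ht⟩ := mem_span_singleton.1 (veeOp_mem_span_singleton hvee P hi)
  refine mem_span_singleton.2 ⟨t, ?_⟩
  rw [hu, map_add, map_add, hNker _ (hN hδN), add_zero, ← ht, map_smul,
    gramProj_symm_apply]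

theorem IsVeeSystem.restrict [FiniteDimensional ℝ V] (hA : IsVeeSystem A) (s : Set ι)
    (L : Submodule ℝ V) (hL : L = ⨅ i ∈ s, LinearMap.ker (A i)) :
    IsVeeSystem (fun i : ↥sᶜ => (A i).domRestrict L) := by
  obtain ⟨φ, hGram, hvee⟩ := isVeeSystem_iff.1 hA
  obtain ⟨ψ, hψ⟩ := exists_linearEquiv_dual_restrict hGram L
  have hann : L.dualAnnihilator = span ℝ (A '' s) := hL ▸ dualAnnihilator_biInf_ker A s
  have hvanish : ∀ i ∈ s, ∀ v ∈ L, A i v = 0 := fun i hi =>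
    (mem_dualAnnihilator _).1 (hann ▸ subset_span (Set.mem_image_of_mem A hi))
  refine isVeeSystem_iff.2 ⟨ψ, fun u v => ?_, fun Pl _ i hi => ?_⟩
  · rw [hψ, hGram, ← sum_compl_eq_sum s _ fun j hj => by rw [hvanish j hj u u.2, zero_mul]]
    rfl
  · rw [veeOp_compl_apply ψ (fun j => (A j).domRestrict L) s Pl
      fun j hj => hvanish j hj _ (ψ.symm _).2, veeOp_domRestrict_apply]
    exact gramProj_veeOp_mem_span_singleton hvee hψ hann
      (fun f hf => show L.dualRestrict f ∈ Pl from LinearMap.mem_ker.1 hf ▸ Pl.zero_mem) hi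

end Restriction

/-- Collinear restricted covectors `λᵢ γ` are not merged into a single `λ γ` with
`λ² = Σ λᵢ²`: merging changes neither the Gram form nor the ∨-conditions, so the family with
multiplicities is used. -/
theorem restriction_isVeeSystem
    {V : Type*} [AddCommGroup V] [Module ℝ V] [FiniteDimensional ℝ V]
    (A : Finset (Module.Dual ℝ V)) (U : Submodule ℝ (Module.Dual ℝ V))
    (hA : IsVeeSystem (fun a : ↥A => (a : Module.Dual ℝ V)))
    (L : Submodule ℝ V)
    (hL : L = ⨅ β ∈ A.filter (fun β => β ∈ U), LinearMap.ker (β : Module.Dual ℝ V)) :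
    IsVeeSystem (fun γ : ↥(A \ A.filter (fun β => β ∈ U)) =>
      (γ : Module.Dual ℝ V).domRestrict L) := by
  have hL' : L = ⨅ a ∈ {a : ↥A | (a : Module.Dual ℝ V) ∈ U},
      LinearMap.ker (a : Module.Dual ℝ V) := by
    rw [hL]
    ext v
    simp
  let e : ↥(A \ A.filter (fun β => β ∈ U)) ≃ ↥{a : ↥A | (a : Module.Dual ℝ V) ∈ U}ᶜ :=
    { toFun := fun γ => ⟨⟨γ, (mem_sdiff.1 γ.2).1⟩,
        fun h => (mem_sdiff.1 γ.2).2 (mem_filter.2 ⟨(mem_sdiff.1 γ.2).1, h⟩)⟩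
      invFun := fun a => ⟨a, mem_sdiff.2 ⟨a.1.2, fun h => a.2 (mem_filter.1 h).2⟩⟩
      left_inv := fun _ => rfl
      right_inv := fun _ => rfl }
  exact (hA.restrict _ L hL').comp_equiv e
end

section
/- For arbitrary positive parameters c_1,…,c_{m}, the set A_m(c) = { √(c_i c_j)(f_i − f_j) : 1 ≤ i < j ≤ m } in ℝ^m is a ∨-system (restricted to the span of its covectors). -/
open scoped Classical

/-- The hyperplane `{x ∈ ℝ^m : Σ x_i = 0}`, the span of the (duals of the) covectors
`f_i − f_j`, on which the family `A_m(c)` is considered. -/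
noncomputable def zeroSumSubspace (m : ℕ) : Submodule ℝ (Fin m → ℝ) :=
  LinearMap.ker (∑ i : Fin m, LinearMap.proj i : (Fin m → ℝ) →ₗ[ℝ] ℝ)

/-- The covectors `√(c_i c_j)(f_i − f_j)`, `i < j`, of the deformed family `A_m(c)`,
restricted to the span of the covectors (the zero-sum hyperplane). -/
noncomputable def deformedA (m : ℕ) (c : Fin m → ℝ) :
    {p : Fin m × Fin m // p.1 < p.2} → Module.Dual ℝ ↥(zeroSumSubspace m) :=
  fun p =>
    (Real.sqrt (c p.1.1 * c p.1.2) •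
      ((LinearMap.proj p.1.1 : (Fin m → ℝ) →ₗ[ℝ] ℝ) -
        (LinearMap.proj p.1.2 : (Fin m → ℝ) →ₗ[ℝ] ℝ))).domRestrict (zeroSumSubspace m)

/-!
The Gram form is `G(u, v) = Σ_{i<j} c_i c_j (u_i - u_j)(v_i - v_j)`, positive definite on the
zero-sum hyperplane. Up to a constant vector, the `G`-dual of `α_ab = √(c_a c_b)(f_a - f_b)` is
`w = √(c_a c_b) / C · (e_a / c_a - e_b / c_b)` with `C = Σ c`, so `c_k c_l (w_k - w_l)` vanishes
unless `{k, l}` meets `{a, b}`. Applying `G`, the ∨-condition for `α_ab` in a plane `Π` reads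
`Σ_{α ∈ Π ∩ A} α(w) α = λ α_ab`. As `f_b - f_l = (f_a - f_l) - (f_a - f_b)`, the covectors `α_al`
and `α_bl` lie in `Π` together, and their contributions add up to `c_l / C · α_ab`; hence
`λ = Σ_{l : α_al ∈ Π} c_l / C`. The same computation with `Π` the whole dual space gives `λ = 1`,
which shows that `w` is indeed the dual of `α_ab`.
-/

open Finset

theorem Finset.two_nsmul_sum_subtype_lt {α M : Type*} [LinearOrder α] [Fintype α]
    [AddCommMonoid M] (h : α → α → M) (hsymm : ∀ k l, h k l = h l k) (hdiag : ∀ k, h k k = 0) :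
    2 • ∑ p : {p : α × α // p.1 < p.2}, h p.1.1 p.1.2 = ∑ k, ∑ l, h k l := by
  have hsplit : ∀ k l, h k l = (if k < l then h k l else 0) + (if l < k then h l k else 0) := by
    intro k l
    rcases lt_trichotomy k l with hkl | rfl | hkl
    · simp [hkl, hkl.not_gt]
    · simp [hdiag]
    · simp [hkl, hkl.not_gt, hsymm k l]
  have hlt : ∑ p : {p : α × α // p.1 < p.2}, h p.1.1 p.1.2
      = ∑ k, ∑ l, if k < l then h k l else 0 := by
    rw [← Finset.sum_subtype (univ.filter fun p : α × α => p.1 < p.2) (by simp)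
      (fun p => h p.1 p.2), Finset.sum_filter, Fintype.sum_prod_type]
  simp_rw [Finset.sum_congr rfl fun k _ => Finset.sum_congr rfl fun l _ => hsplit k l,
    Finset.sum_add_distrib, two_nsmul, hlt,
    Finset.sum_comm (γ := α) (f := fun k l => if l < k then h l k else 0)]

theorem sum_sum_ite_mul_sub {ι : Type*} [Fintype ι] [DecidableEq ι] (P : ι → ι → Prop)
    (hP : ∀ k l, P k l ↔ P l k) {a b : ι} (hab : ∀ l, P a l ↔ P b l) (c x : ι → ℝ) :
    ∑ k, ∑ l, (if P k l then
        (c l * (Pi.single a 1 - Pi.single b 1 : ι → ℝ) k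
          - c k * (Pi.single a 1 - Pi.single b 1 : ι → ℝ) l) * (x k - x l) else 0)
      = 2 * ((∑ l ∈ univ.filter (P a), c l) * (x a - x b)) := by
  set β : ι → ℝ := Pi.single a 1 - Pi.single b 1
  set F : ι → ℝ := fun k => ∑ l, if P k l then c l * (x k - x l) else 0
  have hhalf : ∀ k l, (if P k l then (c l * β k - c k * β l) * (x k - x l) else 0)
      = β k * (if P k l then c l * (x k - x l) else 0)
        + β l * (if P l k then c k * (x l - x k) else 0) := by
    intro k l
    by_cases hkl : P k l
    · simp only [hkl, (hP k l).1 hkl, if_true]; ring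
    · simp only [hkl, mt (hP k l).2 hkl, if_false]; ring
  have hβ : ∑ k, β k * F k = F a - F b := by
    simp [β, sub_mul, Pi.single_apply, Finset.sum_sub_distrib]
  have hF : F a - F b = (∑ l ∈ univ.filter (P a), c l) * (x a - x b) := by
    simp only [F, ← Finset.sum_sub_distrib, Finset.sum_filter, Finset.sum_mul, ← hab]
    refine Finset.sum_congr rfl fun l _ => ?_
    split_ifs <;> ring
  simp_rw [hhalf, Finset.sum_add_distrib]
  rw [Finset.sum_comm (f := fun k l => β l * (if P l k then c k * (x l - x k) else 0))]
  simp_rw [← Finset.mul_sum]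
  rw [← two_mul, hβ, hF]

section

variable {m : ℕ}

theorem mem_zeroSumSubspace_iff {x : Fin m → ℝ} : x ∈ zeroSumSubspace m ↔ ∑ t, x t = 0 := by
  simp [zeroSumSubspace]

theorem zeroSumSubspace_eq_zero_of_forall_eq {u : zeroSumSubspace m}
    (hu : ∀ k l, (u : Fin m → ℝ) k = (u : Fin m → ℝ) l) : u = 0 := by
  ext t
  have hsum := mem_zeroSumSubspace_iff.1 u.2
  simp_rw [hu _ t, Finset.sum_const, Finset.card_univ, Fintype.card_fin, nsmul_eq_mul] at hsum
  have hm : (m : ℝ) ≠ 0 := Nat.cast_ne_zero.2 (Fin.pos t).ne'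
  simpa [hm] using hsum

noncomputable def zeroSumCenter (x : Fin m → ℝ) : zeroSumSubspace m :=
  ⟨fun t => x t - (∑ s, x s) / m, by
    rw [mem_zeroSumSubspace_iff, Finset.sum_sub_distrib, Finset.sum_const, Finset.card_univ,
      Fintype.card_fin, nsmul_eq_mul]
    rcases eq_or_ne m 0 with rfl | hm
    · simp
    · rw [mul_div_cancel₀ _ (Nat.cast_ne_zero.2 hm), sub_self]⟩

theorem zeroSumCenter_sub_zeroSumCenter (x : Fin m → ℝ) (k l : Fin m) :
    (zeroSumCenter x : Fin m → ℝ) k - (zeroSumCenter x : Fin m → ℝ) l = x k - x l := by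
  simp [zeroSumCenter]

noncomputable def zeroSumDiff (k l : Fin m) : Module.Dual ℝ (zeroSumSubspace m) :=
  ((LinearMap.proj k : (Fin m → ℝ) →ₗ[ℝ] ℝ) - LinearMap.proj l).domRestrict (zeroSumSubspace m)

@[simp]
theorem zeroSumDiff_apply (k l : Fin m) (x : zeroSumSubspace m) :
    zeroSumDiff k l x = (x : Fin m → ℝ) k - (x : Fin m → ℝ) l := rfl

theorem zeroSumDiff_swap (k l : Fin m) : zeroSumDiff l k = -zeroSumDiff k l := by
  ext x; simp

theorem zeroSumDiff_sub_zeroSumDiff (a b l : Fin m) :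
    zeroSumDiff a l - zeroSumDiff a b = zeroSumDiff b l := by
  ext x; simp

theorem zeroSumDiff_mem_comm {Pl : Submodule ℝ (Module.Dual ℝ (zeroSumSubspace m))}
    (k l : Fin m) : zeroSumDiff k l ∈ Pl ↔ zeroSumDiff l k ∈ Pl := by
  rw [zeroSumDiff_swap k l, Submodule.neg_mem_iff]

theorem zeroSumDiff_mem_iff_of_mem {Pl : Submodule ℝ (Module.Dual ℝ (zeroSumSubspace m))}
    {a b : Fin m} (hab : zeroSumDiff a b ∈ Pl) (l : Fin m) :
    zeroSumDiff a l ∈ Pl ↔ zeroSumDiff b l ∈ Pl := by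
  rw [← zeroSumDiff_sub_zeroSumDiff a b l]
  exact (Submodule.sub_mem_iff_left _ hab).symm

theorem deformedA_eq_smul (c : Fin m → ℝ) (p : {p : Fin m × Fin m // p.1 < p.2}) :
    deformedA m c p = √(c p.1.1 * c p.1.2) • zeroSumDiff p.1.1 p.1.2 := rfl

variable {c : Fin m → ℝ}

theorem deformedA_mem_iff (hc : ∀ i, 0 < c i)
    {Pl : Submodule ℝ (Module.Dual ℝ (zeroSumSubspace m))} (p : {p : Fin m × Fin m // p.1 < p.2}) :
    deformedA m c p ∈ Pl ↔ zeroSumDiff p.1.1 p.1.2 ∈ Pl := by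
  rw [deformedA_eq_smul]
  exact Submodule.smul_mem_iff _ (Real.sqrt_pos.2 (mul_pos (hc _) (hc _))).ne'

theorem deformedA_apply_mul_deformedA_apply (hc : ∀ i, 0 ≤ c i)
    (p : {p : Fin m × Fin m // p.1 < p.2}) (u v : zeroSumSubspace m) :
    deformedA m c p u * deformedA m c p v
      = c p.1.1 * c p.1.2 * (((u : Fin m → ℝ) p.1.1 - (u : Fin m → ℝ) p.1.2)
          * ((v : Fin m → ℝ) p.1.1 - (v : Fin m → ℝ) p.1.2)) := by
  have hsq := Real.mul_self_sqrt (mul_nonneg (hc p.1.1) (hc p.1.2))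
  simp only [deformedA_eq_smul, LinearMap.smul_apply, zeroSumDiff_apply, smul_eq_mul]
  linear_combination ((u : Fin m → ℝ) p.1.1 - (u : Fin m → ℝ) p.1.2)
    * ((v : Fin m → ℝ) p.1.1 - (v : Fin m → ℝ) p.1.2) * hsq

variable (c) in
noncomputable def deformedDual (a b : Fin m) : zeroSumSubspace m :=
  zeroSumCenter fun t =>
    √(c a * c b) / (∑ s, c s) * ((Pi.single a 1 - Pi.single b 1 : Fin m → ℝ) t / c t)

theorem mul_mul_deformedDual_sub (hc : ∀ i, 0 < c i) (a b k l : Fin m) :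
    c k * c l * ((deformedDual c a b : Fin m → ℝ) k - (deformedDual c a b : Fin m → ℝ) l)
      = √(c a * c b) / (∑ s, c s) * (c l * (Pi.single a 1 - Pi.single b 1 : Fin m → ℝ) k
          - c k * (Pi.single a 1 - Pi.single b 1 : Fin m → ℝ) l) := by
  rw [deformedDual, zeroSumCenter_sub_zeroSumCenter]
  have := (hc k).ne'
  have := (hc l).ne'
  field_simp

theorem sum_filter_deformedA_smul_deformedA (hc : ∀ i, 0 < c i)
    {Pl : Submodule ℝ (Module.Dual ℝ (zeroSumSubspace m))} {a b : Fin m}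
    (hab : zeroSumDiff a b ∈ Pl) :
    ∑ p ∈ univ.filter (fun p => deformedA m c p ∈ Pl),
        deformedA m c p (deformedDual c a b) • deformedA m c p
      = ((∑ l ∈ univ.filter (fun l => zeroSumDiff a l ∈ Pl), c l) / ∑ s, c s)
          • (√(c a * c b) • zeroSumDiff a b) := by
  ext x
  set w := deformedDual c a b
  set P : Fin m → Fin m → Prop := fun k l => zeroSumDiff k l ∈ Pl
  set h : Fin m → Fin m → ℝ := fun k l => √(c a * c b) / (∑ s, c s) *
    (if P k l then (c l * (Pi.single a 1 - Pi.single b 1 : Fin m → ℝ) k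
        - c k * (Pi.single a 1 - Pi.single b 1 : Fin m → ℝ) l)
        * ((x : Fin m → ℝ) k - (x : Fin m → ℝ) l) else 0)
  have hterm : ∀ p : {p : Fin m × Fin m // p.1 < p.2},
      (if deformedA m c p ∈ Pl then deformedA m c p w * deformedA m c p x else 0)
        = h p.1.1 p.1.2 := by
    intro p
    rw [deformedA_mem_iff hc, deformedA_apply_mul_deformedA_apply (fun i => (hc i).le),
      ← mul_assoc, mul_mul_deformedDual_sub hc]
    simp only [h, P, mul_ite, mul_zero, mul_assoc]
  have hsymm : ∀ k l, h k l = h l k := by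
    intro k l
    simp only [h, P, zeroSumDiff_mem_comm k l]
    split_ifs <;> ring
  have hhalf := Finset.two_nsmul_sum_subtype_lt h hsymm (by simp [h])
  rw [← Finset.sum_congr rfl fun p _ => hterm p, ← Finset.sum_filter, two_nsmul] at hhalf
  simp only [h, ← Finset.mul_sum] at hhalf
  rw [sum_sum_ite_mul_sub P zeroSumDiff_mem_comm (zeroSumDiff_mem_iff_of_mem hab)] at hhalf
  simp only [LinearMap.sum_apply, LinearMap.smul_apply, smul_eq_mul, zeroSumDiff_apply]
  linear_combination hhalf / 2

variable (c) in
noncomputable def deformedGram : LinearMap.BilinForm ℝ (zeroSumSubspace m) :=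
  ∑ p, (deformedA m c p).smulRight (deformedA m c p)

theorem deformedGram_apply (u : zeroSumSubspace m) :
    deformedGram c u = ∑ p, deformedA m c p u • deformedA m c p := by
  simp [deformedGram, LinearMap.sum_apply]

theorem deformedGram_nondegenerate (hc : ∀ i, 0 < c i) : (deformedGram c).Nondegenerate := by
  refine .ofSeparatingLeft fun u hu => ?_
  have hzero : ∀ p, deformedA m c p u = 0 := by
    have huu := hu u
    simp only [deformedGram_apply, LinearMap.sum_apply, LinearMap.smul_apply, smul_eq_mul] at huu
    intro p
    exact mul_self_eq_zero.1
      ((Finset.sum_eq_zero_iff_of_nonneg fun p _ => mul_self_nonneg _).1 huu p (mem_univ p))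
  have hlt : ∀ k l, k < l → (u : Fin m → ℝ) k = (u : Fin m → ℝ) l := fun k l hkl => by
    have hkl := hzero ⟨(k, l), hkl⟩
    rw [deformedA_eq_smul, LinearMap.smul_apply, smul_eq_mul, zeroSumDiff_apply] at hkl
    exact sub_eq_zero.1
      ((mul_eq_zero.1 hkl).resolve_left (Real.sqrt_pos.2 (mul_pos (hc k) (hc l))).ne')
  refine zeroSumSubspace_eq_zero_of_forall_eq fun k l => ?_
  rcases lt_trichotomy k l with hkl | rfl | hkl
  · exact hlt k l hkl
  · rfl
  · exact (hlt l k hkl).symm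

theorem deformedGram_deformedDual (hc : ∀ i, 0 < c i) (a b : Fin m) :
    deformedGram c (deformedDual c a b) = √(c a * c b) • zeroSumDiff a b := by
  have hC : ∑ s, c s ≠ 0 := (Finset.sum_pos (fun i _ => hc i) ⟨a, mem_univ a⟩).ne'
  simpa [hC, deformedGram_apply] using
    sum_filter_deformedA_smul_deformedA hc (Submodule.mem_top (x := zeroSumDiff a b))

end

/-- for arbitrary positive parameters `c_1, …, c_m`, the set
`A_m(c) = {√(c_i c_j)(f_i − f_j) : 1 ≤ i < j ≤ m}`, restricted to the span of its
covectors, is a ∨-system. -/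
theorem deformedA_isVeeSystem (m : ℕ) (c : Fin m → ℝ)
    (hc : ∀ i, 0 < c i) :
    IsVeeSystem (deformedA m c) := by
  set φ := (deformedGram c).toDual (deformedGram_nondegenerate hc)
  have hφ : ∀ u, φ u = deformedGram c u := fun u => rfl
  refine ⟨φ, fun u v => ?_, fun Pl _ i hi => ?_⟩
  · simp [hφ, deformedGram_apply, LinearMap.sum_apply]
  obtain ⟨⟨a, b⟩, hab⟩ := i
  have hw : φ.symm (deformedA m c ⟨(a, b), hab⟩) = deformedDual c a b :=
    φ.symm_apply_eq.2 (deformedGram_deformedDual hc a b).symm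
  refine ⟨(∑ l ∈ univ.filter (fun l => zeroSumDiff a l ∈ Pl), c l) / ∑ s, c s, ?_⟩
  rw [hw]
  apply φ.injective
  simp only [map_sum, map_smul, LinearEquiv.apply_symm_apply]
  rw [hφ, deformedGram_deformedDual hc]
  exact sum_filter_deformedA_smul_deformedA hc ((deformedA_mem_iff hc _).1 hi)
end
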